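/- For every n ≥ 2, the set QB(n) is finite and its cardinality is at most ⌊log₂ n⌋. -/

import Mathlib

/-- The Colless index of the maximally balanced bifurcating tree with `n` leaves:
`c 1 = 0` and `c n = c ⌈n/2⌉ + c ⌊n/2⌋ + (⌈n/2⌉ - ⌊n/2⌋)` for `n ≥ 2`. -/
def c : ℕ → ℕ
  | 0 => 0
  | 1 => 0
  | n + 2 => c ((n + 3) / 2) + c ((n + 2) / 2) + ((n + 3) / 2 - (n + 2) / 2)
decreasing_by all_goals omega

lemma c_zero : c 0 = 0 := by simp [c]
lemma c_one : c 1 = 0 := by simp [c]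

lemma c_two_add (n : ℕ) : c (n + 2) = c ((n + 3) / 2) + c ((n + 2) / 2) + ((n + 3) / 2 - (n + 2) / 2) := by
  rw [c]

lemma c_even {m : ℕ} (hm : 1 ≤ m) : c (2 * m) = 2 * c m := by
  obtain ⟨k, rfl⟩ : ∃ k, m = k + 1 := ⟨m - 1, by omega⟩
  rw [show 2 * (k + 1) = 2 * k + 2 by ring, c_two_add,
    show (2 * k + 3) / 2 = k + 1 by omega, show (2 * k + 2) / 2 = k + 1 by omega]
  omega

lemma c_odd {m : ℕ} (hm : 1 ≤ m) : c (2 * m + 1) = c (m + 1) + c m + 1 := by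
  obtain ⟨k, rfl⟩ : ∃ k, m = k + 1 := ⟨m - 1, by omega⟩
  rw [show 2 * (k + 1) + 1 = (2 * k + 1) + 2 by ring, c_two_add,
    show (2 * k + 1 + 3) / 2 = k + 1 + 1 by omega, show (2 * k + 1 + 2) / 2 = k + 1 by omega]
  omega

lemma c_two : c 2 = 0 := by
  have h := c_even (m := 1) le_rfl
  norm_num [c_one] at h
  exact h

lemma c_three : c 3 = 1 := by
  have h := c_odd (m := 1) le_rfl
  norm_num [c_one, c_two] at h
  exact h

lemma c_four : c 4 = 0 := by
  have h := c_even (m := 2) (by norm_num)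
  norm_num [c_two] at h
  exact h

lemma c_five : c 5 = 2 := by
  have h := c_odd (m := 2) (by norm_num)
  norm_num [c_two, c_three] at h
  exact h

/-- Minimality of the balanced split, with a strictness supplement in the
odd–odd case. -/
lemma cL : ∀ n b k, 2 * b + k = n → 1 ≤ b →
    (c (2 * b + k) ≤ c (b + k) + c b + k) ∧
    (b % 2 = 1 → k % 2 = 0 → 2 ≤ k → c (2 * b + k) + 2 ≤ c (b + k) + c b + k) := by
  intro n
  induction n using Nat.strong_induction_on with
  | _ n ih =>
    intro b k hn hb
    by_cases hb2 : b % 2 = 0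
    · -- b even
      obtain ⟨B, rfl⟩ : ∃ B, b = 2 * B := ⟨b / 2, by omega⟩
      have hB : 1 ≤ B := by omega
      have e3 : c (2 * B) = 2 * c B := c_even hB
      by_cases hk2 : k % 2 = 0
      · -- b even, k even
        obtain ⟨K, rfl⟩ : ∃ K, k = 2 * K := ⟨k / 2, by omega⟩
        have e1 : c (2 * (2 * B) + 2 * K) = 2 * c (2 * B + K) := by
          rw [show 2 * (2 * B) + 2 * K = 2 * (2 * B + K) by ring]
          exact c_even (by omega)
        have e2 : c (2 * B + 2 * K) = 2 * c (B + K) := by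
          rw [show 2 * B + 2 * K = 2 * (B + K) by ring]
          exact c_even (by omega)
        have I1 := (ih (2 * B + K) (by omega) B K rfl (by omega)).1
        exact ⟨by omega, by omega⟩
      · -- b even, k odd
        obtain ⟨K, rfl⟩ : ∃ K, k = 2 * K + 1 := ⟨k / 2, by omega⟩
        have e1 : c (2 * (2 * B) + (2 * K + 1)) = c (2 * B + K + 1) + c (2 * B + K) + 1 := by
          rw [show 2 * (2 * B) + (2 * K + 1) = 2 * (2 * B + K) + 1 by ring]
          exact c_odd (by omega)
        have e2 : c (2 * B + (2 * K + 1)) = c (B + K + 1) + c (B + K) + 1 := by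
          rw [show 2 * B + (2 * K + 1) = 2 * (B + K) + 1 by ring]
          exact c_odd (by omega)
        have I1 := (ih (2 * B + K + 1) (by omega) B (K + 1) (by omega) (by omega)).1
        rw [show 2 * B + (K + 1) = 2 * B + K + 1 by omega,
          show B + (K + 1) = B + K + 1 by omega] at I1
        have I2 := (ih (2 * B + K) (by omega) B K rfl (by omega)).1
        exact ⟨by omega, by omega⟩
    · -- b odd
      obtain ⟨B, rfl⟩ : ∃ B, b = 2 * B + 1 := ⟨b / 2, by omega⟩
      by_cases hk2 : k % 2 = 0
      · -- b odd, k even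
        obtain ⟨K, rfl⟩ : ∃ K, k = 2 * K := ⟨k / 2, by omega⟩
        by_cases hK : K = 0
        · subst hK
          have e1 : c (2 * (2 * B + 1) + 2 * 0) = 2 * c (2 * B + 1) := by
            rw [show 2 * (2 * B + 1) + 2 * 0 = 2 * (2 * B + 1) by ring]
            exact c_even (by omega)
          have e2 : c (2 * B + 1 + 2 * 0) = c (2 * B + 1) := by
            rw [show 2 * B + 1 + 2 * 0 = 2 * B + 1 by ring]
          exact ⟨by omega, by omega⟩
        · by_cases hB0 : B = 0
          · subst hB0
            have e1 : c (2 * (2 * 0 + 1) + 2 * K) = 2 * c (K + 1) := by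
              rw [show 2 * (2 * 0 + 1) + 2 * K = 2 * (K + 1) by ring]
              exact c_even (by omega)
            have e2 : c (2 * 0 + 1 + 2 * K) = c (K + 1) + c K + 1 := by
              rw [show 2 * 0 + 1 + 2 * K = 2 * K + 1 by ring]
              exact c_odd (by omega)
            have e3' : c (2 * 0 + 1) = 0 := c_one
            have I1 := (ih (K + 1) (by omega) 1 (K - 1) (by omega) le_rfl).1
            rw [show 2 * 1 + (K - 1) = K + 1 by omega, show 1 + (K - 1) = K by omega,
              c_one] at I1
            exact ⟨by omega, fun _ _ _ => by omega⟩
          · have e1 : c (2 * (2 * B + 1) + 2 * K) = 2 * c (2 * B + K + 1) := by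
              rw [show 2 * (2 * B + 1) + 2 * K = 2 * (2 * B + K + 1) by ring]
              exact c_even (by omega)
            have e2 : c (2 * B + 1 + 2 * K) = c (B + K + 1) + c (B + K) + 1 := by
              rw [show 2 * B + 1 + 2 * K = 2 * (B + K) + 1 by ring]
              exact c_odd (by omega)
            have e3 : c (2 * B + 1) = c (B + 1) + c B + 1 := c_odd (by omega)
            have I1 := (ih (2 * B + K + 1) (by omega) (B + 1) (K - 1) (by omega) (by omega)).1
            rw [show 2 * (B + 1) + (K - 1) = 2 * B + K + 1 by omega,
              show B + 1 + (K - 1) = B + K by omega] at I1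
            have I2 := (ih (2 * B + K + 1) (by omega) B (K + 1) (by omega) (by omega)).1
            rw [show 2 * B + (K + 1) = 2 * B + K + 1 by omega,
              show B + (K + 1) = B + K + 1 by omega] at I2
            exact ⟨by omega, fun _ _ _ => by omega⟩
      · -- b odd, k odd
        obtain ⟨K, rfl⟩ : ∃ K, k = 2 * K + 1 := ⟨k / 2, by omega⟩
        by_cases hB0 : B = 0
        · subst hB0
          have e1 : c (2 * (2 * 0 + 1) + (2 * K + 1)) = c (K + 1 + 1) + c (K + 1) + 1 := by
            rw [show 2 * (2 * 0 + 1) + (2 * K + 1) = 2 * (K + 1) + 1 by ring]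
            exact c_odd (by omega)
          have e2 : c (2 * 0 + 1 + (2 * K + 1)) = 2 * c (K + 1) := by
            rw [show 2 * 0 + 1 + (2 * K + 1) = 2 * (K + 1) by ring]
            exact c_even (by omega)
          have e3' : c (2 * 0 + 1) = 0 := c_one
          have I1 := (ih (K + 2) (by omega) 1 K (by omega) le_rfl).1
          rw [show 2 * 1 + K = K + 1 + 1 by omega, show (1 : ℕ) + K = K + 1 by omega,
            c_one] at I1
          exact ⟨by omega, by omega⟩
        · have e1 : c (2 * (2 * B + 1) + (2 * K + 1)) =
              c (2 * B + K + 1 + 1) + c (2 * B + K + 1) + 1 := by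
            rw [show 2 * (2 * B + 1) + (2 * K + 1) = 2 * (2 * B + K + 1) + 1 by ring]
            exact c_odd (by omega)
          have e2 : c (2 * B + 1 + (2 * K + 1)) = 2 * c (B + K + 1) := by
            rw [show 2 * B + 1 + (2 * K + 1) = 2 * (B + K + 1) by ring]
            exact c_even (by omega)
          have e3 : c (2 * B + 1) = c (B + 1) + c B + 1 := c_odd (by omega)
          have I1 := (ih (2 * B + K + 1 + 1) (by omega) (B + 1) K (by omega) (by omega)).1
          rw [show 2 * (B + 1) + K = 2 * B + K + 1 + 1 by omega,
            show B + 1 + K = B + K + 1 by omega] at I1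
          have I2 := (ih (2 * B + K + 1) (by omega) B (K + 1) (by omega) (by omega)).1
          rw [show 2 * B + (K + 1) = 2 * B + K + 1 by omega,
            show B + (K + 1) = B + K + 1 by omega] at I2
          exact ⟨by omega, by omega⟩

lemma cmin {a b : ℕ} (hb : 1 ≤ b) (hba : b ≤ a) : c (a + b) ≤ c a + c b + (a - b) := by
  have h := (cL (2 * b + (a - b)) b (a - b) rfl hb).1
  rw [show 2 * b + (a - b) = a + b by omega, show b + (a - b) = a by omega] at h
  exact h

lemma cstrict {a b : ℕ} (hb : 1 ≤ b) (hba : b < a) (ha2 : a % 2 = 1) (hb2 : b % 2 = 1) :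
    c (a + b) + 2 ≤ c a + c b + (a - b) := by
  have h := (cL (2 * b + (a - b)) b (a - b) rfl hb).2 hb2 (by omega) (by omega)
  rw [show 2 * b + (a - b) = a + b by omega, show b + (a - b) = a by omega] at h
  exact h

/-- \`QB n\` is the set of pairs \`(n₁, n₂)\` with \`1 ≤ n₂ ≤ n₁\`, \`n₁ + n₂ = n\` and
\`c n₁ + c n₂ + (n₁ - n₂) = c n\`. -/
def QB (n : ℕ) : Set (ℕ × ℕ) :=
  {p : ℕ × ℕ | 1 ≤ p.2 ∧ p.2 ≤ p.1 ∧ p.1 + p.2 = n ∧ c p.1 + c p.2 + (p.1 - p.2) = c n}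

lemma mem_QB {n a b : ℕ} :
    (a, b) ∈ QB n ↔ 1 ≤ b ∧ b ≤ a ∧ a + b = n ∧ c a + c b + (a - b) = c n := Iff.rfl

lemma qb_even {m a b : ℕ} (h : (a, b) ∈ QB (2 * m)) :
    (a = m ∧ b = m) ∨ (∃ x y, a = 2 * x ∧ b = 2 * y ∧ (x, y) ∈ QB m) := by
  rw [mem_QB] at h
  obtain ⟨hb, hba, hsum, heq⟩ := h
  by_cases hab : a = b
  · exact Or.inl ⟨by omega, by omega⟩
  · have hlt : b < a := by omega
    by_cases h2 : a % 2 = 0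
    · refine Or.inr ⟨a / 2, b / 2, by omega, by omega, ?_⟩
      have ea := c_even (m := a / 2) (by omega)
      rw [show 2 * (a / 2) = a by omega] at ea
      have eb := c_even (m := b / 2) (by omega)
      rw [show 2 * (b / 2) = b by omega] at eb
      have em := c_even (m := m) (by omega)
      rw [mem_QB]
      exact ⟨by omega, by omega, by omega, by omega⟩
    · exfalso
      have hs := cstrict (a := a) (b := b) hb hlt (by omega) (by omega)
      rw [hsum] at hs
      omega

lemma qb_odd {m a b : ℕ} (hm : 2 ≤ m) (h : (a, b) ∈ QB (2 * m + 1)) :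
    ((a + 1) / 2, (b + 1) / 2) ∈ QB (m + 1) ∧ (a / 2, b / 2) ∈ QB m := by
  rw [mem_QB] at h
  obtain ⟨hb, hba, hsum, heq⟩ := h
  have hm1 : c (2 * m + 1) = c (m + 1) + c m + 1 := c_odd (by omega)
  have hb2 : 2 ≤ b := by
    by_contra hc
    have hb1 : b = 1 := by omega
    subst hb1
    have ha : a = 2 * m := by omega
    subst ha
    have ea : c (2 * m) = 2 * c m := c_even (by omega)
    by_cases hm2 : m = 2
    · subst hm2
      rw [c_one, c_five] at heq
      norm_num [c_four] at heq
    · have hmin := cmin (a := m) (b := 1) le_rfl (by omega)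
      rw [c_one] at hmin heq
      omega
  have hlt : b < a := by omega
  by_cases hpa : a % 2 = 1
  · -- a odd, b even
    obtain ⟨α, rfl⟩ : ∃ t, a = 2 * t + 1 := ⟨a / 2, by omega⟩
    obtain ⟨β, rfl⟩ : ∃ t, b = 2 * t := ⟨b / 2, by omega⟩
    have hβ : 1 ≤ β := by omega
    have hαβ : β ≤ α := by omega
    have ea : c (2 * α + 1) = c (α + 1) + c α + 1 := c_odd (by omega)
    have eb : c (2 * β) = 2 * c β := c_even hβ
    have h1 := cmin (a := α + 1) (b := β) hβ (by omega)
    have h2 := cmin (a := α) (b := β) hβ hαβ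
    rw [show α + 1 + β = m + 1 by omega] at h1
    rw [show α + β = m by omega] at h2
    have q1 : c (m + 1) = c (α + 1) + c β + (α + 1 - β) := by omega
    have q2 : c m = c α + c β + (α - β) := by omega
    constructor
    · rw [mem_QB, show (2 * α + 1 + 1) / 2 = α + 1 by omega, show (2 * β + 1) / 2 = β by omega]
      exact ⟨by omega, by omega, by omega, by omega⟩
    · rw [mem_QB, show (2 * α + 1) / 2 = α by omega, show 2 * β / 2 = β by omega]
      exact ⟨by omega, by omega, by omega, by omega⟩
  · -- a even, b odd
    obtain ⟨α, rfl⟩ : ∃ t, a = 2 * t := ⟨a / 2, by omega⟩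
    obtain ⟨β, rfl⟩ : ∃ t, b = 2 * t + 1 := ⟨b / 2, by omega⟩
    have hβ : 1 ≤ β := by omega
    have hαβ : β + 1 ≤ α := by omega
    have ea : c (2 * α) = 2 * c α := c_even (by omega)
    have eb : c (2 * β + 1) = c (β + 1) + c β + 1 := c_odd hβ
    have h1 := cmin (a := α) (b := β + 1) (by omega) hαβ
    have h2 := cmin (a := α) (b := β) hβ (by omega)
    rw [show α + (β + 1) = m + 1 by omega] at h1
    rw [show α + β = m by omega] at h2
    have q1 : c (m + 1) = c α + c (β + 1) + (α - (β + 1)) := by omega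
    have q2 : c m = c α + c β + (α - β) := by omega
    constructor
    · rw [mem_QB, show (2 * α + 1) / 2 = α by omega, show (2 * β + 1 + 1) / 2 = β + 1 by omega]
      exact ⟨by omega, by omega, by omega, by omega⟩
    · rw [mem_QB, show 2 * α / 2 = α by omega, show (2 * β + 1) / 2 = β by omega]
      exact ⟨by omega, by omega, by omega, by omega⟩

lemma qb_lt : ∀ n a b, (a, b) ∈ QB n → a < 3 * b := by
  intro n
  induction n using Nat.strong_induction_on with
  | _ n ih =>
    intro a b h
    have h' := h
    rw [mem_QB] at h'
    obtain ⟨hb, hba, hsum, heq⟩ := h'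
    rcases Nat.even_or_odd n with hne | hno
    · have hne' : n % 2 = 0 := Nat.even_iff.mp hne
      obtain ⟨m, rfl⟩ : ∃ m, n = 2 * m := ⟨n / 2, by omega⟩
      rcases qb_even h with ⟨rfl, rfl⟩ | ⟨x, y, rfl, rfl, hx⟩
      · omega
      · have := ih m (by omega) x y hx
        omega
    · have hno' : n % 2 = 1 := Nat.odd_iff.mp hno
      obtain ⟨m, rfl⟩ : ∃ m, n = 2 * m + 1 := ⟨n / 2, by omega⟩
      by_cases hm : m ≤ 1
      · omega
      · obtain ⟨h1, h2⟩ := qb_odd (by omega) h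
        have g1 := ih (m + 1) (by omega) _ _ h1
        have g2 := ih m (by omega) _ _ h2
        omega

lemma qb_dvd : ∀ n a b, (a, b) ∈ QB n → b < a →
    2 ^ (Nat.log 2 (a - b) + 2) ∣ (n - (a - b)) ∨
    2 ^ (Nat.log 2 (a - b) + 2) ∣ (n + (a - b)) := by
  intro n
  induction n using Nat.strong_induction_on with
  | _ n ih =>
    intro a b h hlt
    have h' := h
    rw [mem_QB] at h'
    obtain ⟨hb, hba, hsum, heq⟩ := h'
    by_cases hd1 : a - b = 1
    · rw [hd1, Nat.log_one_right, show (2:ℕ) ^ (0 + 2) = 4 by norm_num]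
      omega
    rcases Nat.even_or_odd n with hne | hno
    · -- n even
      have hne' : n % 2 = 0 := Nat.even_iff.mp hne
      obtain ⟨m, rfl⟩ : ∃ m, n = 2 * m := ⟨n / 2, by omega⟩
      rcases qb_even h with ⟨rfl, rfl⟩ | ⟨x, y, rfl, rfl, hxy⟩
      · exact (lt_irrefl _ hlt).elim
      · have hyx : y < x := by omega
        have hIH := ih m (by omega) x y hxy hyx
        have hlog : Nat.log 2 (2 * x - 2 * y) = Nat.log 2 (x - y) + 1 := by
          rw [show 2 * x - 2 * y = (x - y) * 2 by omega]
          exact Nat.log_mul_base (by norm_num) (by omega)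
        rw [hlog]
        have hps : (2:ℕ) ^ (Nat.log 2 (x - y) + 1 + 2) = 2 * 2 ^ (Nat.log 2 (x - y) + 2) := by
          rw [show Nat.log 2 (x - y) + 1 + 2 = (Nat.log 2 (x - y) + 2) + 1 by omega, pow_succ]
          ring
        rcases hIH with hI | hI
        · left
          rw [hps, show 2 * m - (2 * x - 2 * y) = 2 * (m - (x - y)) by omega]
          exact mul_dvd_mul_left 2 hI
        · right
          rw [hps, show 2 * m + (2 * x - 2 * y) = 2 * (m + (x - y)) by omega]
          exact mul_dvd_mul_left 2 hI
    · -- n odd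
      have hno' : n % 2 = 1 := Nat.odd_iff.mp hno
      obtain ⟨m, rfl⟩ : ∃ m, n = 2 * m + 1 := ⟨n / 2, by omega⟩
      have hd3 : 3 ≤ a - b := by omega
      have hm2 : 2 ≤ m := by omega
      obtain ⟨hc, hf⟩ := qb_odd hm2 h
      by_cases hpa : a % 2 = 1
      · -- a odd, b even;  d = 2f+1 with f = α - β ≥ 1
        obtain ⟨α, rfl⟩ : ∃ t, a = 2 * t + 1 := ⟨a / 2, by omega⟩
        obtain ⟨β, rfl⟩ : ∃ t, b = 2 * t := ⟨b / 2, by omega⟩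
        rw [show (2 * α + 1 + 1) / 2 = α + 1 by omega, show (2 * β + 1) / 2 = β by omega] at hc
        rw [show (2 * α + 1) / 2 = α by omega, show 2 * β / 2 = β by omega] at hf
        have hfge : 1 ≤ α - β := by omega
        have hq1 : 2 ^ Nat.log 2 (α - β) ≤ α - β := Nat.pow_log_le_self 2 (by omega)
        have hq2 : α - β < 2 ^ (Nat.log 2 (α - β) + 1) :=
          Nat.lt_pow_succ_log_self (by norm_num) _
        have hq3 : (2:ℕ) ^ (Nat.log 2 (α - β) + 1) = 2 ^ Nat.log 2 (α - β) * 2 :=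
          pow_succ 2 _
        have hq4 : (2:ℕ) ^ (Nat.log 2 (α - β) + 2) = 2 ^ (Nat.log 2 (α - β) + 1) * 2 :=
          pow_succ 2 _
        have hFf := ih m (by omega) α β hf (by omega)
        have hFE : (2:ℕ) ^ (Nat.log 2 (α - β) + 2) ∣ 2 ^ (Nat.log 2 (α + 1 - β) + 2) := by
          refine pow_dvd_pow 2 ?_
          have := Nat.log_mono_right (b := 2) (show α - β ≤ α + 1 - β by omega)
          omega
        have hA : 2 ^ (Nat.log 2 (α - β) + 2) ∣ m - (α - β) := by
          rcases hFf with hA | hB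
          · exact hA
          · exfalso
            have hFe := ih (m + 1) (by omega) (α + 1) β hc (by omega)
            rcases hFe with hC | hD
            · have hC' := hFE.trans hC
              rw [show m + 1 - (α + 1 - β) = m - (α - β) by omega] at hC'
              have h2f := Nat.dvd_sub hB hC'
              rw [show m + (α - β) - (m - (α - β)) = 2 * (α - β) by omega] at h2f
              have := Nat.le_of_dvd (by omega) h2f
              omega
            · have hD' := hFE.trans hD
              have h2 := Nat.dvd_sub hD' hB
              rw [show m + 1 + (α + 1 - β) - (m + (α - β)) = 2 by omega] at h2
              have := Nat.le_of_dvd (by norm_num) h2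
              omega
        left
        have hdlog : Nat.log 2 (2 * α + 1 - 2 * β) = Nat.log 2 (α - β) + 1 := by
          apply Nat.log_eq_of_pow_le_of_lt_pow
          · omega
          · have hq5 : (2:ℕ) ^ (Nat.log 2 (α - β) + 1 + 1) = 2 ^ (Nat.log 2 (α - β) + 1) * 2 :=
              pow_succ 2 _
            omega
        rw [hdlog]
        have hps : (2:ℕ) ^ (Nat.log 2 (α - β) + 1 + 2) = 2 * 2 ^ (Nat.log 2 (α - β) + 2) := by
          rw [show Nat.log 2 (α - β) + 1 + 2 = (Nat.log 2 (α - β) + 2) + 1 by omega, pow_succ]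
          ring
        rw [hps, show 2 * m + 1 - (2 * α + 1 - 2 * β) = 2 * (m - (α - β)) by omega]
        exact mul_dvd_mul_left 2 hA
      · -- a even, b odd;  d = 2f-1 with f = α - β ≥ 2
        obtain ⟨α, rfl⟩ : ∃ t, a = 2 * t := ⟨a / 2, by omega⟩
        obtain ⟨β, rfl⟩ : ∃ t, b = 2 * t + 1 := ⟨b / 2, by omega⟩
        rw [show (2 * α + 1) / 2 = α by omega, show (2 * β + 1 + 1) / 2 = β + 1 by omega] at hc
        rw [show 2 * α / 2 = α by omega, show (2 * β + 1) / 2 = β by omega] at hf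
        have hfge : 2 ≤ α - β := by omega
        have hq1 : 2 ^ Nat.log 2 (α - β) ≤ α - β := Nat.pow_log_le_self 2 (by omega)
        have hq2 : α - β < 2 ^ (Nat.log 2 (α - β) + 1) :=
          Nat.lt_pow_succ_log_self (by norm_num) _
        have hq3 : (2:ℕ) ^ (Nat.log 2 (α - β) + 1) = 2 ^ Nat.log 2 (α - β) * 2 :=
          pow_succ 2 _
        have hq4 : (2:ℕ) ^ (Nat.log 2 (α - β) + 2) = 2 ^ (Nat.log 2 (α - β) + 1) * 2 :=
          pow_succ 2 _
        have hFf := ih m (by omega) α β hf (by omega)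
        by_cases hpow : α - β = 2 ^ Nat.log 2 (α - β)
        · -- f is a power of two : conclude the right disjunct, modulus 2^(log f + 2)
          right
          have hdlog : Nat.log 2 (2 * α - (2 * β + 1)) = Nat.log 2 (α - β) := by
            apply Nat.log_eq_of_pow_le_of_lt_pow <;> omega
          rw [hdlog]
          have hmf : 2 ^ (Nat.log 2 (α - β) + 1) ∣ m + (α - β) := by
            rcases hFf with hA | hB
            · have hA' : (2:ℕ) ^ (Nat.log 2 (α - β) + 1) ∣ m - (α - β) :=
                (pow_dvd_pow 2 (by omega)).trans hA
              have hsum2 : m + (α - β) = (m - (α - β)) + 2 ^ (Nat.log 2 (α - β) + 1) := by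
                omega
              rw [hsum2]
              exact dvd_add hA' dvd_rfl
            · exact (pow_dvd_pow 2 (by omega)).trans hB
          rw [hq4, show 2 * m + 1 + (2 * α - (2 * β + 1)) = (m + (α - β)) * 2 by omega]
          exact mul_dvd_mul_right hmf 2
        · -- f not a power of two
          have hfge3 : 2 ^ Nat.log 2 (α - β) + 1 ≤ α - β := by omega
          have hlog1 : 1 ≤ Nat.log 2 (α - β) :=
            (Nat.le_log_iff_pow_le (by norm_num) (by omega)).mpr (by omega)
          have hB : 2 ^ (Nat.log 2 (α - β) + 2) ∣ m + (α - β) := by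
            rcases hFf with hA | hB
            · exfalso
              have hFe := ih (m + 1) (by omega) α (β + 1) hc (by omega)
              have hloge : Nat.log 2 (α - (β + 1)) = Nat.log 2 (α - β) := by
                apply Nat.log_eq_of_pow_le_of_lt_pow <;> omega
              rw [hloge] at hFe
              rcases hFe with hC | hD
              · have h2 := Nat.dvd_sub hC hA
                rw [show m + 1 - (α - (β + 1)) - (m - (α - β)) = 2 by omega] at h2
                have := Nat.le_of_dvd (by norm_num) h2
                omega
              · have h2f := Nat.dvd_sub hD hA
                rw [show m + 1 + (α - (β + 1)) - (m - (α - β)) = 2 * (α - β) by omega] at h2f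
                have := Nat.le_of_dvd (by omega) h2f
                omega
            · exact hB
          right
          have hdlog : Nat.log 2 (2 * α - (2 * β + 1)) = Nat.log 2 (α - β) + 1 := by
            apply Nat.log_eq_of_pow_le_of_lt_pow
            · omega
            · have hq5 : (2:ℕ) ^ (Nat.log 2 (α - β) + 1 + 1) = 2 ^ (Nat.log 2 (α - β) + 1) * 2 :=
                pow_succ 2 _
              omega
          rw [hdlog]
          have hps : (2:ℕ) ^ (Nat.log 2 (α - β) + 1 + 2) = 2 * 2 ^ (Nat.log 2 (α - β) + 2) := by
            rw [show Nat.log 2 (α - β) + 1 + 2 = (Nat.log 2 (α - β) + 2) + 1 by omega, pow_succ]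
            ring
          rw [hps, show 2 * m + 1 + (2 * α - (2 * β + 1)) = 2 * (m + (α - β)) by omega]
          exact mul_dvd_mul_left 2 hB

/-- For every `n ≥ 2`, `QB n` is finite with at most `⌊log₂ n⌋` elements. -/
theorem QB_finite_card_le (n : ℕ) (hn : 2 ≤ n) :
    (QB n).Finite ∧ (QB n).ncard ≤ Nat.log 2 n := by
  have hfin : (QB n).Finite := by
    apply Set.Finite.subset (Set.finite_Icc ((0, 0) : ℕ × ℕ) (n, n))
    intro p hp
    obtain ⟨h1, h2, h3, h4⟩ := hp
    rw [Set.mem_Icc]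
    exact ⟨⟨Nat.zero_le _, Nat.zero_le _⟩, ⟨by omega, by omega⟩⟩
  refine ⟨hfin, ?_⟩
  have hinj : Set.InjOn (fun p : ℕ × ℕ => Nat.log 2 (p.1 - p.2)) (QB n) := by
    intro p hp q hq hlog
    obtain ⟨p1, p2, p3, p4⟩ := hp
    obtain ⟨q1, q2, q3, q4⟩ := hq
    simp only at hlog
    have hdd : p.1 - p.2 = q.1 - q.2 := by
      by_cases hp0 : p.1 - p.2 = 0
      · by_cases hq0 : q.1 - q.2 = 0
        · omega
        · exfalso
          rw [hp0, Nat.log_zero_right] at hlog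
          have hqe : 2 ≤ q.1 - q.2 := by omega
          have : 1 ≤ Nat.log 2 (q.1 - q.2) :=
            (Nat.le_log_iff_pow_le (by norm_num) (by omega)).mpr (by omega)
          omega
      · by_cases hq0 : q.1 - q.2 = 0
        · exfalso
          rw [hq0, Nat.log_zero_right] at hlog
          have : 1 ≤ Nat.log 2 (p.1 - p.2) :=
            (Nat.le_log_iff_pow_le (by norm_num) (by omega)).mpr (by omega)
          omega
        · have Dp := qb_dvd n p.1 p.2 ⟨p1, p2, p3, p4⟩ (by omega)
          have Dq := qb_dvd n q.1 q.2 ⟨q1, q2, q3, q4⟩ (by omega)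
          rw [hlog] at Dp
          have hbp1 : 2 ^ Nat.log 2 (q.1 - q.2) ≤ p.1 - p.2 := by
            have := Nat.pow_log_le_self 2 hp0
            rwa [hlog] at this
          have hbp2 : p.1 - p.2 < 2 ^ (Nat.log 2 (q.1 - q.2) + 1) := by
            have := Nat.lt_pow_succ_log_self (by norm_num : 1 < 2) (p.1 - p.2)
            rwa [hlog] at this
          have hbq1 : 2 ^ Nat.log 2 (q.1 - q.2) ≤ q.1 - q.2 := Nat.pow_log_le_self 2 hq0
          have hbq2 : q.1 - q.2 < 2 ^ (Nat.log 2 (q.1 - q.2) + 1) :=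
            Nat.lt_pow_succ_log_self (by norm_num) _
          have hq3 : (2:ℕ) ^ (Nat.log 2 (q.1 - q.2) + 1) = 2 ^ Nat.log 2 (q.1 - q.2) * 2 :=
            pow_succ 2 _
          have hq4 : (2:ℕ) ^ (Nat.log 2 (q.1 - q.2) + 2) = 2 ^ (Nat.log 2 (q.1 - q.2) + 1) * 2 :=
            pow_succ 2 _
          rcases Dp with hP | hP <;> rcases Dq with hQ | hQ
          · have d1 := Nat.dvd_sub hP hQ
            have d2 := Nat.dvd_sub hQ hP
            rw [show n - (p.1 - p.2) - (n - (q.1 - q.2)) = (q.1 - q.2) - (p.1 - p.2) by omega]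
              at d1
            rw [show n - (q.1 - q.2) - (n - (p.1 - p.2)) = (p.1 - p.2) - (q.1 - q.2) by omega]
              at d2
            by_contra hne
            rcases Nat.lt_or_ge (p.1 - p.2) (q.1 - q.2) with hlt' | hge
            · have := Nat.le_of_dvd (by omega) d1
              omega
            · have := Nat.le_of_dvd (by omega) d2
              omega
          · exfalso
            have d1 := Nat.dvd_sub hQ hP
            rw [show n + (q.1 - q.2) - (n - (p.1 - p.2)) = (p.1 - p.2) + (q.1 - q.2) by omega]
              at d1
            have := Nat.le_of_dvd (by omega) d1
            omega
          · exfalso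
            have d1 := Nat.dvd_sub hP hQ
            rw [show n + (p.1 - p.2) - (n - (q.1 - q.2)) = (p.1 - p.2) + (q.1 - q.2) by omega]
              at d1
            have := Nat.le_of_dvd (by omega) d1
            omega
          · have d1 := Nat.dvd_sub hP hQ
            have d2 := Nat.dvd_sub hQ hP
            rw [show n + (p.1 - p.2) - (n + (q.1 - q.2)) = (p.1 - p.2) - (q.1 - q.2) by omega]
              at d1
            rw [show n + (q.1 - q.2) - (n + (p.1 - p.2)) = (q.1 - q.2) - (p.1 - p.2) by omega]
              at d2
            by_contra hne
            rcases Nat.lt_or_ge (p.1 - p.2) (q.1 - q.2) with hlt' | hge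
            · have := Nat.le_of_dvd (by omega) d2
              omega
            · have := Nat.le_of_dvd (by omega) d1
              omega
    have hc1 : p.1 = q.1 := by omega
    have hc2 : p.2 = q.2 := by omega
    exact Prod.ext hc1 hc2
  have hsub : (fun p : ℕ × ℕ => Nat.log 2 (p.1 - p.2)) '' QB n ⊆
      ↑(Finset.range (Nat.log 2 n)) := by
    rintro _ ⟨p, hp, rfl⟩
    obtain ⟨h1, h2, h3, h4⟩ := hp
    simp only [Finset.coe_range, Set.mem_Iio]
    by_cases hd : p.1 - p.2 = 0
    · rw [hd, Nat.log_zero_right]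
      exact Nat.log_pos (by norm_num) hn
    · have h3b := qb_lt n p.1 p.2 ⟨h1, h2, h3, h4⟩
      have hq1 : 2 ^ Nat.log 2 (p.1 - p.2) ≤ p.1 - p.2 := Nat.pow_log_le_self 2 hd
      have hq3 : (2:ℕ) ^ (Nat.log 2 (p.1 - p.2) + 1) = 2 ^ Nat.log 2 (p.1 - p.2) * 2 :=
        pow_succ 2 _
      have hdn : 2 ^ (Nat.log 2 (p.1 - p.2) + 1) ≤ n := by omega
      have := (Nat.le_log_iff_pow_le (by norm_num) (by omega)).mpr hdn
      omega
  have himg := Set.ncard_image_of_injOn hinj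
  have hle : ((fun p : ℕ × ℕ => Nat.log 2 (p.1 - p.2)) '' QB n).ncard ≤
      (↑(Finset.range (Nat.log 2 n)) : Set ℕ).ncard :=
    Set.ncard_le_ncard hsub (Finset.finite_toSet _)
  rw [Set.ncard_coe_finset, Finset.card_range] at hle
  omega
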